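/- arXiv:1406.1453 — 2 statements merged into one kernel-verified Lean document; each statement's English description precedes it below -/
import Mathlib

section
/- Let λ, μ be integral weights with λ dominant and λ − μ ∈ Q₊. Then Lusztig's q-analogue M_λ^μ(q) = Σ_{w∈W} ε(w) P_q(w(λ+ρ) − (μ+ρ)) is a monic polynomial in q of degree ht(λ−μ). In particular M_λ^λ(q) = 1. -/
open Polynomial

/-- A weight (written in simple-root coordinates) lies in `Q₊`, the monoid generated
by the simple roots, iff all its coordinates are nonnegative integers. -/
def inQplus {ι : Type} [Fintype ι] (μ : ι → ℚ) : Prop :=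
  ∀ i, 0 ≤ μ i ∧ (μ i).den = 1

instance {ι : Type} [Fintype ι] : DecidablePred (inQplus (ι := ι)) := fun _ => by
  unfold inQplus; infer_instance

/-- The height of a weight written in simple-root coordinates (a rational number). -/
def htQ {ι : Type} [Fintype ι] (μ : ι → ℚ) : ℚ := ∑ i, μ i

/-- The height as a natural number (meaningful when `inQplus μ`). -/
def htN {ι : Type} [Fintype ι] (μ : ι → ℚ) : ℕ := (∑ i, μ i).num.toNat

/-- A bound on the entries of any tuple `(n_α)` with `∑ n_α α = μ`. -/
noncomputable def PqBound {ι : Type} [Fintype ι] (μ : ι → ℚ) : ℕ := (∑ i, μ i).num.toNat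

/-- The (finite) set of tuples `(n_α)_{α ∈ Δ⁺}` of nonnegative integers with `∑ n_α α = μ`. -/
noncomputable def PqTuples {ι : Type} [Fintype ι] [DecidableEq ι] (Δp : Finset (ι → ℚ)) (μ : ι → ℚ) :
    Finset (↥Δp → ℕ) :=
  (Fintype.piFinset fun _ : Δp => Finset.range (PqBound μ + 1)).filter
    (fun n => ∑ α : Δp, (n α : ℚ) • (α : ι → ℚ) = μ)

/-- Lusztig's `q`-analogue of Kostant's partition function:
`P_q(μ) = ∑_{(n_α) : ∑ n_α α = μ} q^{∑ n_α}`, the coefficient of `e^μ` in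
`1/∏_{α ∈ Δ⁺} (1 - q e^α)`. -/
noncomputable def Pq {ι : Type} [Fintype ι] [DecidableEq ι] (Δp : Finset (ι → ℚ)) (μ : ι → ℚ) :
    Polynomial ℚ :=
  ∑ n ∈ PqTuples Δp μ, Polynomial.X ^ (∑ α : Δp, n α)

/-- The coefficient of `e^{-μ}` in the degenerate Cherednik kernel
`ξ_q = ∏_{γ ∈ Δ⁺} (1 - e^{-γ})/(1 - q e^{-γ})`: expanding each factor as
`(1 - e^{-γ}) ∑_{n ≥ 0} q^n e^{-nγ}`, the coefficient is
`∑_{(ε_γ, n_γ) : ∑ (ε_γ + n_γ) γ = μ} (-1)^{∑ ε_γ} q^{∑ n_γ}` with `ε_γ ∈ {0,1}`. -/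
noncomputable def xiCoeff {ι : Type} [Fintype ι] [DecidableEq ι] (Δp : Finset (ι → ℚ)) (μ : ι → ℚ) :
    Polynomial ℚ :=
  ∑ p ∈ (Fintype.piFinset fun _ : Δp =>
      Finset.range 2 ×ˢ Finset.range (PqBound μ + 1)).filter
      (fun p => ∑ α : Δp, (((p α).1 + (p α).2 : ℕ) : ℚ) • (α : ι → ℚ) = μ),
    (-1 : Polynomial ℚ) ^ (∑ α : Δp, (p α).1) * Polynomial.X ^ (∑ α : Δp, (p α).2)

/-- A combinatorial model of (the positive part of) a finite crystallographic root system.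
Weights are written in simple-root coordinates, so the weight space is `ι → ℚ` and the
`i`-th simple root is `Pi.single i 1`.  `B` is a `W`-invariant inner product, `s i` is the
simple reflection associated with the simple root `αᵢ`. -/
structure RootSystemData (ι : Type) [Fintype ι] [DecidableEq ι] where
  Δplus : Finset (ι → ℚ)
  simple_mem : ∀ i, Pi.single i 1 ∈ Δplus
  coords_nat : ∀ α ∈ Δplus, inQplus α
  nonzero : ∀ α ∈ Δplus, α ≠ 0
  B : (ι → ℚ) →ₗ[ℚ] (ι → ℚ) →ₗ[ℚ] ℚ
  B_symm : ∀ x y, B x y = B y x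
  B_pos : ∀ α ∈ Δplus, 0 < B α α
  s : ι → ((ι → ℚ) ≃ₗ[ℚ] (ι → ℚ))
  s_apply : ∀ i x, s i x =
    x - (2 * B x (Pi.single i 1) / B (Pi.single i 1) (Pi.single i 1)) • (Pi.single i 1 : ι → ℚ)
  s_perm : ∀ i, ∀ α ∈ Δplus, α ≠ Pi.single i 1 → s i α ∈ Δplus
  crystal : ∀ α ∈ Δplus, ∀ β ∈ Δplus, ∃ n : ℤ, 2 * B α β / B β β = (n : ℚ)

namespace RootSystemData

variable {ι : Type} [Fintype ι] [DecidableEq ι] (D : RootSystemData ι)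

/-- The pairing `⟨x, y^∨⟩ = 2(x,y)/(y,y)`. -/
def cpair (x y : ι → ℚ) : ℚ := 2 * D.B x y / D.B y y

/-- The Weyl group `W`, generated by the simple reflections. -/
def weyl : Subgroup ((ι → ℚ) ≃ₗ[ℚ] (ι → ℚ)) := Subgroup.closure (Set.range D.s)

/-- The sign character `ε(w) = (-1)^{ℓ(w)} = det w`. -/
noncomputable def sign (w : D.weyl) : ℚ := LinearMap.det (w.1 : (ι → ℚ) →ₗ[ℚ] (ι → ℚ))

/-- `ρ`, the half-sum of the positive roots. -/
def rho : ι → ℚ := (2⁻¹ : ℚ) • ∑ α ∈ D.Δplus, α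

/-- A weight is dominant iff it pairs nonnegatively with every simple coroot. -/
def dominant (lam : ι → ℚ) : Prop := ∀ i, 0 ≤ D.cpair lam (Pi.single i 1)

/-- A weight is integral iff it pairs integrally with every simple coroot. -/
def integralWt (lam : ι → ℚ) : Prop := ∀ i, ∃ n : ℤ, D.cpair lam (Pi.single i 1) = (n : ℚ)

/-- The length `ℓ(w)` = number of positive roots sent to negative roots by `w`. -/
def len (w : D.weyl) : ℕ := (D.Δplus.filter fun α => -(w.1 α) ∈ D.Δplus).card

/-- The Poincaré polynomial `t_ν(q) = ∑_{w ∈ W_ν} q^{ℓ(w)}` of the stabiliser of `ν`. -/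
noncomputable def tPoly [Fintype D.weyl] (ν : ι → ℚ) : Polynomial ℚ :=
  ∑ w ∈ Finset.univ.filter (fun w : D.weyl => w.1 ν = ν), Polynomial.X ^ D.len w

/-- Lusztig's `q`-analogue `M_λ^μ(q) = ∑_{w ∈ W} ε(w) P_q(w(λ+ρ) - (μ+ρ))`. -/
noncomputable def Mq [Fintype D.weyl] (lam mu : ι → ℚ) : Polynomial ℚ :=
  ∑ w : D.weyl, D.sign w • Pq D.Δplus (w.1 (lam + D.rho) - (mu + D.rho))

end RootSystemData

set_option linter.unusedSectionVars false
section Basic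
variable {ι : Type} [Fintype ι] [DecidableEq ι]

lemma htQ_add (x y : ι → ℚ) : htQ (x + y) = htQ x + htQ y := by
  simp [htQ, Finset.sum_add_distrib]

lemma htQ_sub (x y : ι → ℚ) : htQ (x - y) = htQ x - htQ y := by
  simp [htQ, Finset.sum_sub_distrib]

lemma htQ_smul (c : ℚ) (x : ι → ℚ) : htQ (c • x) = c * htQ x := by
  simp [htQ, Finset.mul_sum]

lemma inQplus_coord (ν : ι → ℚ) (h : inQplus ν) (i : ι) :
    ν i = (((ν i).num.toNat : ℕ) : ℚ) := by
  obtain ⟨h1, h2⟩ := h i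
  have h3 := (Rat.den_eq_one_iff (ν i)).1 h2
  have hn : (0:ℤ) ≤ (ν i).num := Rat.num_nonneg.2 h1
  rw [← h3]
  norm_cast
  exact (Int.toNat_of_nonneg hn).symm

lemma htQ_nonneg (ν : ι → ℚ) (h : inQplus ν) : 0 ≤ htQ ν :=
  Finset.sum_nonneg fun i _ => (h i).1

lemma htN_cast (ν : ι → ℚ) (h : inQplus ν) : ((htN ν : ℕ) : ℚ) = htQ ν := by
  have h0 : htQ ν = ((∑ i, (ν i).num.toNat : ℕ) : ℚ) := by
    rw [htQ]; push_cast; exact Finset.sum_congr rfl fun i _ => by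
      simpa using inQplus_coord ν h i
  have h1 : (∑ i, ν i) = ((∑ i, (ν i).num.toNat : ℕ) : ℚ) := by rw [← htQ, h0]
  have h2 : htN ν = ∑ i, (ν i).num.toNat := by
    rw [htN, h1, Rat.num_natCast, Int.toNat_natCast]
  rw [h0, h2]

end Basic
namespace RootSystemData
variable {ι : Type} [Fintype ι] [DecidableEq ι] (D : RootSystemData ι)

/-- abbreviation for the i-th simple root -/
local notation "e" => fun i => (Pi.single i 1 : ι → ℚ)

lemma not_neg_mem {α : ι → ℚ} (hα : α ∈ D.Δplus) : -α ∉ D.Δplus := by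
  intro hneg
  apply D.nonzero α hα
  funext i
  have h1 := (D.coords_nat α hα i).1
  have h2 := (D.coords_nat (-α) hneg i).1
  simp only [Pi.neg_apply, neg_nonneg] at h2
  simpa using le_antisymm h2 h1

lemma root_ht_ge_one {α : ι → ℚ} (hα : α ∈ D.Δplus) : 1 ≤ htQ α := by
  by_contra hlt
  push_neg at hlt
  apply D.nonzero α hα
  have hq := D.coords_nat α hα
  funext i
  by_contra hne
  have h1 : 1 ≤ α i := by
    rcases lt_or_eq_of_le (hq i).1 with h | h
    · have h3 := (Rat.den_eq_one_iff (α i)).1 (hq i).2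
      have h4 : 0 < (α i).num := by rw [Rat.num_pos]; exact h
      have h5 : (1:ℤ) ≤ (α i).num := h4
      calc (1:ℚ) = ((1:ℤ):ℚ) := by norm_num
        _ ≤ ((α i).num : ℚ) := by exact_mod_cast h5
        _ = α i := h3
    · exact absurd h.symm (by simpa using hne)
  have h6 : 1 ≤ htQ α := le_trans h1 (Finset.single_le_sum (fun j _ => (hq j).1) (Finset.mem_univ i))
  linarith

lemma B_single_pos (i : ι) : 0 < D.B (e i) (e i) := D.B_pos _ (D.simple_mem i)

lemma cpair_add_left (x y z : ι → ℚ) : D.cpair (x + y) z = D.cpair x z + D.cpair y z := by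
  simp only [cpair, map_add, LinearMap.add_apply]; ring

lemma cpair_sub_left (x y z : ι → ℚ) : D.cpair (x - y) z = D.cpair x z - D.cpair y z := by
  simp only [cpair, map_sub, LinearMap.sub_apply]; ring

lemma cpair_smul_left (c : ℚ) (x z : ι → ℚ) : D.cpair (c • x) z = c * D.cpair x z := by
  simp only [cpair, map_smul, LinearMap.smul_apply, smul_eq_mul]; ring

lemma cpair_self {y : ι → ℚ} (h : D.B y y ≠ 0) : D.cpair y y = 2 := by
  rw [cpair, mul_div_assoc, div_self h, mul_one]

lemma s_apply' (i : ι) (x : ι → ℚ) : D.s i x = x - D.cpair x (e i) • (e i) := D.s_apply i x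

lemma s_single (i : ι) : D.s i (e i) = -(e i) := by
  rw [s_apply', cpair_self D (D.B_single_pos i).ne']
  module

lemma s_s (i : ι) (x : ι → ℚ) : D.s i (D.s i x) = x := by
  rw [s_apply' D i x, s_apply', cpair_sub_left, cpair_smul_left,
    cpair_self D (D.B_single_pos i).ne']
  module

lemma s_mul_self (i : ι) : D.s i * D.s i = 1 := by
  apply LinearEquiv.ext; intro x; exact D.s_s i x

lemma s_inv (i : ι) : (D.s i)⁻¹ = D.s i :=
  inv_eq_of_mul_eq_one_right (D.s_mul_self i)

lemma B_s_invariant (i : ι) (x y : ι → ℚ) : D.B (D.s i x) (D.s i y) = D.B x y := by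
  rw [s_apply', s_apply']
  have hBy : D.B y (e i) = D.B (e i) y := D.B_symm y (e i)
  simp only [map_sub, map_smul, LinearMap.sub_apply, LinearMap.smul_apply, smul_eq_mul, cpair]
  have h : D.B (e i) (e i) ≠ 0 := (D.B_single_pos i).ne'
  rw [D.B_symm y (Pi.single i 1), D.B_symm x (Pi.single i 1)]
  field_simp
  ring

/-- `IsRoot` : lies in `Δ = Δ⁺ ∪ -Δ⁺`. -/
def IsRt (x : ι → ℚ) : Prop := x ∈ D.Δplus ∨ -x ∈ D.Δplus

lemma s_isRt (i : ι) {x : ι → ℚ} (h : D.IsRt x) : D.IsRt (D.s i x) := by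
  have key : ∀ α ∈ D.Δplus, D.IsRt (D.s i α) := by
    intro α hα
    by_cases hsimple : α = e i
    · right; rw [hsimple, s_single]; simpa using D.simple_mem i
    · left; exact D.s_perm i α hα hsimple
  rcases h with h | h
  · exact key x h
  · rcases key _ h with h2 | h2
    · right; rwa [← map_neg]
    · left; rwa [← map_neg, neg_neg] at h2

/-- product of simple reflections along a word -/
def wprod (l : List ι) : (ι → ℚ) ≃ₗ[ℚ] (ι → ℚ) := (l.map D.s).prod

lemma wprod_nil : D.wprod [] = 1 := rfl

lemma wprod_cons (a : ι) (l : List ι) : D.wprod (a :: l) = D.s a * D.wprod l := by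
  simp [wprod]

lemma wprod_append (l₁ l₂ : List ι) : D.wprod (l₁ ++ l₂) = D.wprod l₁ * D.wprod l₂ := by
  simp [wprod]

lemma wprod_isRt (l : List ι) {x : ι → ℚ} (h : D.IsRt x) : D.IsRt (D.wprod l x) := by
  induction l with
  | nil => simpa [wprod_nil] using h
  | cons a t ih =>
    rw [wprod_cons]
    exact D.s_isRt a ih

lemma B_wprod_invariant (l : List ι) (x y : ι → ℚ) :
    D.B (D.wprod l x) (D.wprod l y) = D.B x y := by
  induction l with
  | nil => rfl
  | cons a t ih =>
    rw [wprod_cons]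
    show D.B (D.s a (D.wprod t x)) (D.s a (D.wprod t y)) = _
    rw [B_s_invariant, ih]

lemma wprod_mem_weyl (l : List ι) : D.wprod l ∈ D.weyl := by
  induction l with
  | nil => exact Subgroup.one_mem _
  | cons a t ih =>
    rw [wprod_cons]
    exact Subgroup.mul_mem _ (Subgroup.subset_closure ⟨a, rfl⟩) ih

lemma wprod_reverse (l : List ι) : D.wprod l.reverse = (D.wprod l)⁻¹ := by
  induction l with
  | nil => simp [wprod_nil]
  | cons a t ih =>
    rw [List.reverse_cons, wprod_append, wprod_cons, ih, wprod_cons, wprod_nil,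
      mul_inv_rev, mul_one, s_inv]

lemma exists_word (w : D.weyl) : ∃ l : List ι, D.wprod l = w.1 := by
  obtain ⟨w, hw⟩ := w
  induction hw using Subgroup.closure_induction with
  | mem g hg => obtain ⟨i, rfl⟩ := hg; exact ⟨[i], by simp [wprod]⟩
  | one => exact ⟨[], rfl⟩
  | mul g₁ g₂ h₁ h₂ ih₁ ih₂ =>
    obtain ⟨l₁, rfl⟩ := ih₁; obtain ⟨l₂, rfl⟩ := ih₂
    exact ⟨l₁ ++ l₂, by rw [wprod_append]⟩
  | inv g hg ih =>
    obtain ⟨l, rfl⟩ := ih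
    exact ⟨l.reverse, D.wprod_reverse l⟩

end RootSystemData
namespace RootSystemData
variable {ι : Type} [Fintype ι] [DecidableEq ι] (D : RootSystemData ι)

local notation "e" => fun i => (Pi.single i 1 : ι → ℚ)

lemma wprod_singleton (i : ι) : D.wprod [i] = D.s i := by
  simp [wprod]

lemma conj_simple (l : List ι) (j a : ι) (h : D.wprod l (e j) = e a) :
    D.s a * D.wprod l * D.s j = D.wprod l := by
  have hBinv := D.B_wprod_invariant l
  apply LinearEquiv.ext; intro x
  show D.s a (D.wprod l (D.s j x)) = D.wprod l x
  have hBa : D.B (e a) (e a) = D.B (e j) (e j) := by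
    rw [← h, hBinv]
  have hc : ∀ y : ι → ℚ, D.cpair (D.wprod l y) (e a) = D.cpair y (e j) := by
    intro y
    rw [cpair, cpair, hBa, ← h, hBinv]
  rw [s_apply' D j x, map_sub, map_smul, h, s_apply']
  rw [cpair_sub_left, cpair_smul_left, hc, cpair_self D (by rw [hBa]; exact (D.B_single_pos j).ne')]
  module

lemma deletion (l : List ι) (j : ι) (h : -(D.wprod l (e j)) ∈ D.Δplus) :
    ∃ l' : List ι, l'.length + 1 = l.length ∧ D.wprod l' = D.wprod l * D.s j := by
  induction l with
  | nil =>
    exfalso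
    rw [wprod_nil] at h
    exact D.not_neg_mem (D.simple_mem j) (by simpa using h)
  | cons a t ih =>
    rw [wprod_cons] at h
    by_cases hcase : -(D.wprod t (e j)) ∈ D.Δplus
    · obtain ⟨l', hlen, hprod⟩ := ih hcase
      exact ⟨a :: l', by simpa using hlen, by rw [wprod_cons, hprod, wprod_cons, mul_assoc]⟩
    · -- wprod t (e j) ∈ Δplus and s a of it is negative, so it equals e a
      have hrt : D.IsRt (D.wprod t (e j)) := D.wprod_isRt t (Or.inl (D.simple_mem j))
      have hpos : D.wprod t (e j) ∈ D.Δplus := by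
        rcases hrt with h1 | h1
        · exact h1
        · exact absurd h1 hcase
      have heq : D.wprod t (e j) = e a := by
        by_contra hne
        have h2 := D.s_perm a _ hpos hne
        show False
        exact D.not_neg_mem h2 (by simpa using h)
      refine ⟨t, by simp, ?_⟩
      have hconj := D.conj_simple t j a heq
      rw [wprod_cons, mul_assoc, ← mul_assoc (D.s a), hconj]

lemma sum_roots_s (i : ι) :
    D.s i (∑ α ∈ D.Δplus, α) = (∑ α ∈ D.Δplus, α) - (2:ℚ) • (e i) := by
  rw [map_sum]
  rw [← Finset.add_sum_erase _ (fun α => D.s i α) (D.simple_mem i), s_single]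
  rw [← Finset.add_sum_erase _ (fun α => α) (D.simple_mem i)]
  have hbij : ∑ α ∈ D.Δplus.erase (e i), D.s i α = ∑ α ∈ D.Δplus.erase (e i), α := by
    apply Finset.sum_nbij' (fun α => D.s i α) (fun α => D.s i α)
    · intro α hα
      obtain ⟨hne, hmem⟩ := Finset.mem_erase.1 hα
      refine Finset.mem_erase.2 ⟨?_, D.s_perm i α hmem hne⟩
      intro hbad
      have : α = -(e i) := by
        have := congrArg (D.s i) hbad
        rwa [s_s, s_single] at this
      rw [this] at hmem
      exact D.not_neg_mem (D.simple_mem i) (by simpa using hmem)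
    · intro α hα
      obtain ⟨hne, hmem⟩ := Finset.mem_erase.1 hα
      refine Finset.mem_erase.2 ⟨?_, D.s_perm i α hmem hne⟩
      intro hbad
      have : α = -(e i) := by
        have := congrArg (D.s i) hbad
        rwa [s_s, s_single] at this
      rw [this] at hmem
      exact D.not_neg_mem (D.simple_mem i) (by simpa using hmem)
    · intro α _; exact D.s_s i α
    · intro α _; exact D.s_s i α
    · intro α _; rfl
  rw [hbij]
  module

lemma cpair_sum_roots (i : ι) : D.cpair (∑ α ∈ D.Δplus, α) (e i) = 2 := by
  have h1 := D.sum_roots_s i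
  rw [s_apply'] at h1
  have h2 : D.cpair (∑ α ∈ D.Δplus, α) (e i) • (e i) = (2:ℚ) • (e i) := by
    have := congrArg (fun x => (∑ α ∈ D.Δplus, α) - x) h1
    simpa using this
  have h3 := congrArg (fun f => f i) h2
  simpa using h3

lemma cpair_rho (i : ι) : D.cpair D.rho (e i) = 1 := by
  rw [rho, cpair_smul_left, cpair_sum_roots]
  norm_num

lemma cpair_xi_ge_one (lam : ι → ℚ) (hdom : D.dominant lam) (i : ι) :
    1 ≤ D.cpair (lam + D.rho) (e i) := by
  rw [cpair_add_left, cpair_rho]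
  have := hdom i
  linarith

lemma key (lam : ι → ℚ) (hdom : D.dominant lam) :
    ∀ (k : ℕ) (l : List ι), l.length = k →
      (∀ i, 0 ≤ (lam + D.rho - D.wprod l (lam + D.rho)) i) ∧
      (D.wprod l ≠ 1 → 0 < htQ (lam + D.rho - D.wprod l (lam + D.rho))) := by
  intro k
  induction k using Nat.strong_induction_on with
  | _ k IH =>
    intro l hlen
    rcases List.eq_nil_or_concat l with rfl | ⟨L, i, rfl⟩
    · rw [wprod_nil]
      constructor
      · intro i; simp
      · intro h; exact absurd rfl h
    · set ξ := lam + D.rho with hξ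
      have hlenL : L.length + 1 = k := by simpa using hlen
      have hw : D.wprod (L.concat i) = D.wprod L * D.s i := by
        rw [List.concat_eq_append, wprod_append, wprod_singleton]
      have hrt : D.IsRt (D.wprod L (e i)) := D.wprod_isRt L (Or.inl (D.simple_mem i))
      rcases hrt with hpos | hneg
      · -- case A
        have hdecomp : ξ - D.wprod (L.concat i) ξ =
            (ξ - D.wprod L ξ) + D.cpair ξ (e i) • (D.wprod L (e i)) := by
          rw [hw]
          show ξ - D.wprod L (D.s i ξ) = _
          rw [s_apply' D i ξ, map_sub, map_smul]
          module
        have hC : 1 ≤ D.cpair ξ (e i) := D.cpair_xi_ge_one lam hdom i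
        have hIH := IH L.length (by omega) L rfl
        constructor
        · intro j
          rw [hdecomp]
          have h1 := hIH.1 j
          have h2 := (D.coords_nat _ hpos j).1
          simp only [Pi.add_apply, Pi.smul_apply, smul_eq_mul]
          nlinarith
        · intro _
          rw [hdecomp, htQ_add, htQ_smul]
          have h1 : 0 ≤ htQ (ξ - D.wprod L ξ) := Finset.sum_nonneg fun j _ => hIH.1 j
          have h2 : 1 ≤ htQ (D.wprod L (e i)) := D.root_ht_ge_one hpos
          nlinarith
      · -- case B : deletion
        obtain ⟨l', hlen', hprod⟩ := D.deletion L i hneg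
        rw [← hw] at hprod
        have hIH := IH l'.length (by omega) l' rfl
        rw [hprod] at hIH
        exact hIH

lemma key_weyl (lam : ι → ℚ) (hdom : D.dominant lam) (w : D.weyl) (hw : w ≠ 1) :
    htQ (w.1 (lam + D.rho) - (lam + D.rho)) < 0 := by
  obtain ⟨l, hl⟩ := D.exists_word w
  have h := (D.key lam hdom l.length l rfl).2 (by rw [hl]; intro h1; exact hw (Subtype.ext h1))
  rw [hl] at h
  have hneg : htQ (w.1 (lam + D.rho) - (lam + D.rho)) =
      - htQ (lam + D.rho - w.1 (lam + D.rho)) := by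
    rw [← neg_sub]
    simp [htQ]
  rw [hneg]
  linarith

end RootSystemData
namespace RootSystemData
variable {ι : Type} [Fintype ι] [DecidableEq ι] (D : RootSystemData ι)

lemma htQ_sum {γ : Type*} (s : Finset γ) (f : γ → ι → ℚ) :
    htQ (∑ a ∈ s, f a) = ∑ a ∈ s, htQ (f a) := by
  simp only [htQ, Finset.sum_apply]
  exact Finset.sum_comm

lemma tuple_sum_eq (ν : ι → ℚ) (n : ↥D.Δplus → ℕ) (hn : n ∈ PqTuples D.Δplus ν) :
    ∑ α : ↥D.Δplus, (n α : ℚ) * htQ (α : ι → ℚ) = htQ ν := by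
  have h := (Finset.mem_filter.1 hn).2
  rw [← h, htQ_sum]
  exact Finset.sum_congr rfl fun α _ => by rw [htQ_smul]

lemma tuple_sum_le (ν : ι → ℚ) (n : ↥D.Δplus → ℕ) (hn : n ∈ PqTuples D.Δplus ν) :
    ((∑ α : ↥D.Δplus, n α : ℕ) : ℚ) ≤ htQ ν := by
  rw [← tuple_sum_eq D ν n hn]
  push_cast
  apply Finset.sum_le_sum
  intro α _
  have h1 : (1:ℚ) ≤ htQ (α : ι → ℚ) := D.root_ht_ge_one α.2
  nlinarith [Nat.cast_nonneg (α := ℚ) (n α)]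

lemma Pq_degree_lt (ν : ι → ℚ) (N : ℕ) (hN : htQ ν < (N : ℚ)) :
    (Pq D.Δplus ν).degree < (N : WithBot ℕ) := by
  apply lt_of_le_of_lt (Polynomial.degree_sum_le _ _)
  rw [Finset.sup_lt_iff (by exact WithBot.bot_lt_coe N)]
  intro n hn
  rw [Polynomial.degree_X_pow]
  have h := lt_of_le_of_lt (tuple_sum_le D ν n hn) hN
  exact_mod_cast h

lemma simple_of_ht_one {α : ι → ℚ} (hα : α ∈ D.Δplus) (h1 : htQ α = 1) :
    ∃ i, α = Pi.single i 1 := by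
  have hq := D.coords_nat α hα
  set c : ι → ℕ := fun i => (α i).num.toNat with hc
  have hcoord : ∀ i, α i = (c i : ℚ) := fun i => inQplus_coord α hq i
  have hsum : ∑ i, c i = 1 := by
    have : ((∑ i, c i : ℕ) : ℚ) = 1 := by
      push_cast
      rw [← h1, htQ]
      exact Finset.sum_congr rfl fun i _ => (hcoord i).symm
    exact_mod_cast this
  have hex : ∃ i, c i ≠ 0 := by
    by_contra hall
    push_neg at hall
    simp [hall] at hsum
  obtain ⟨i, hi⟩ := hex
  refine ⟨i, ?_⟩
  have hle : c i ≤ 1 := hsum ▸ Finset.single_le_sum (fun j _ => Nat.zero_le _) (Finset.mem_univ i)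
  have hci : c i = 1 := le_antisymm hle (Nat.one_le_iff_ne_zero.2 hi)
  have hrest : ∀ j, j ≠ i → c j = 0 := by
    intro j hj
    have h2 : ∑ k ∈ Finset.univ.erase i, c k = 0 := by
      have := Finset.add_sum_erase Finset.univ c (Finset.mem_univ i)
      omega
    exact Finset.sum_eq_zero_iff.1 h2 j (Finset.mem_erase.2 ⟨hj, Finset.mem_univ j⟩)
  funext j
  rcases eq_or_ne j i with rfl | hj
  · rw [hcoord j, hci, Pi.single_eq_same]; norm_num
  · rw [hcoord j, hrest j hj, Pi.single_eq_of_ne hj]; norm_num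

/-- the canonical tuple supported on the simple roots -/
noncomputable def canonTuple (ν : ι → ℚ) : ↥D.Δplus → ℕ :=
  fun α => ∑ i, if (α : ι → ℚ) = Pi.single i 1 then (ν i).num.toNat else 0

lemma single_injective' (i j : ι) (h : (Pi.single i 1 : ι → ℚ) = Pi.single j 1) : i = j := by
  by_contra hne
  have h2 := congrArg (fun f => f i) h
  simp only [Pi.single_eq_same] at h2
  rw [Pi.single_eq_of_ne hne] at h2
  norm_num at h2

lemma canonTuple_simple (ν : ι → ℚ) (i : ι) (α : ↥D.Δplus) (hα : (α : ι → ℚ) = Pi.single i 1) :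
    D.canonTuple ν α = (ν i).num.toNat := by
  rw [canonTuple]
  rw [Finset.sum_eq_single i]
  · simp [hα]
  · intro j _ hj
    rw [if_neg]
    rw [hα]
    intro h
    exact hj (single_injective' j i h.symm)
  · simp

lemma canonTuple_nonsimple (ν : ι → ℚ) (α : ↥D.Δplus) (hα : ∀ i, (α : ι → ℚ) ≠ Pi.single i 1) :
    D.canonTuple ν α = 0 := by
  rw [canonTuple]
  exact Finset.sum_eq_zero fun i _ => if_neg (hα i)

lemma canonTuple_le (ν : ι → ℚ) (α : ↥D.Δplus) : D.canonTuple ν α ≤ ∑ i, (ν i).num.toNat := by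
  rw [canonTuple]
  exact Finset.sum_le_sum fun i _ => by split <;> omega

lemma sum_c_eq_htN (ν : ι → ℚ) (hν : inQplus ν) : ∑ i, (ν i).num.toNat = htN ν := by
  have h : ((∑ i, (ν i).num.toNat : ℕ) : ℚ) = ((htN ν : ℕ) : ℚ) := by
    rw [htN_cast ν hν, htQ]
    push_cast
    exact Finset.sum_congr rfl fun i _ => (inQplus_coord ν hν i).symm
  exact_mod_cast h

lemma canonTuple_spec (ν : ι → ℚ) (hν : inQplus ν) :
    ∑ α : ↥D.Δplus, ((D.canonTuple ν α : ℕ) : ℚ) • (α : ι → ℚ) = ν := by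
  have key : ∀ α : ↥D.Δplus, ((D.canonTuple ν α : ℕ) : ℚ) • (α : ι → ℚ) =
      ∑ i, (if (α : ι → ℚ) = Pi.single i 1 then ((ν i).num.toNat : ℚ) else 0) • (α : ι → ℚ) := by
    intro α
    rw [canonTuple, Nat.cast_sum, Finset.sum_smul]
    exact Finset.sum_congr rfl fun i _ => by split <;> simp
  rw [Finset.sum_congr rfl fun α _ => key α, Finset.sum_comm]
  have inner : ∀ i, ∑ α : ↥D.Δplus,
      (if (α : ι → ℚ) = Pi.single i 1 then ((ν i).num.toNat : ℚ) else 0) • (α : ι → ℚ) =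
      ((ν i).num.toNat : ℚ) • (Pi.single i 1 : ι → ℚ) := by
    intro i
    rw [Finset.sum_eq_single (⟨Pi.single i 1, D.simple_mem i⟩ : ↥D.Δplus)]
    · simp
    · intro β _ hβ
      rw [if_neg, zero_smul]
      intro h
      exact hβ (Subtype.ext h)
    · simp
  rw [Finset.sum_congr rfl fun i _ => inner i]
  funext j
  simp only [Finset.sum_apply, Pi.smul_apply, smul_eq_mul]
  rw [Finset.sum_eq_single j]
  · rw [Pi.single_eq_same, mul_one]
    exact (inQplus_coord ν hν j).symm
  · intro i _ hij
    rw [Pi.single_eq_of_ne (Ne.symm hij), mul_zero]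
  · simp

lemma canonTuple_mem (ν : ι → ℚ) (hν : inQplus ν) :
    D.canonTuple ν ∈ PqTuples D.Δplus ν := by
  rw [PqTuples, Finset.mem_filter]
  constructor
  · rw [Fintype.mem_piFinset]
    intro α
    rw [Finset.mem_range]
    have h1 := D.canonTuple_le ν α
    have h2 := sum_c_eq_htN ν hν
    have : PqBound ν = htN ν := rfl
    omega
  · exact D.canonTuple_spec ν hν

lemma canonTuple_sum (ν : ι → ℚ) (hν : inQplus ν) :
    ∑ α : ↥D.Δplus, D.canonTuple ν α = htN ν := by
  rw [← sum_c_eq_htN ν hν]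
  simp only [canonTuple]
  rw [Finset.sum_comm]
  apply Finset.sum_congr rfl
  intro i _
  rw [Finset.sum_eq_single (⟨Pi.single i 1, D.simple_mem i⟩ : ↥D.Δplus)]
  · simp
  · intro β _ hβ
    exact if_neg fun h => hβ (Subtype.ext h)
  · simp

lemma tuple_eq_canon (ν : ι → ℚ) (hν : inQplus ν) (n : ↥D.Δplus → ℕ)
    (hn : n ∈ PqTuples D.Δplus ν) (hsum : ∑ α : ↥D.Δplus, n α = htN ν) :
    n = D.canonTuple ν := by
  -- each α in the support has height 1
  have hkey : ∀ α : ↥D.Δplus, n α = 0 ∨ htQ (α : ι → ℚ) = 1 := by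
    have he := tuple_sum_eq D ν n hn
    have h2 : ∑ α : ↥D.Δplus, ((n α : ℚ) * htQ (α : ι → ℚ) - (n α : ℚ)) = 0 := by
      rw [Finset.sum_sub_distrib, he]
      have : ∑ α : ↥D.Δplus, ((n α : ℕ) : ℚ) = ((htN ν : ℕ) : ℚ) := by
        rw [← hsum]; push_cast; ring
      rw [this, htN_cast ν hν, sub_self]
    have hnonneg : ∀ α : ↥D.Δplus, 0 ≤ (n α : ℚ) * htQ (α : ι → ℚ) - (n α : ℚ) := by
      intro α
      have h1 : (1:ℚ) ≤ htQ (α : ι → ℚ) := D.root_ht_ge_one α.2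
      nlinarith [Nat.cast_nonneg (α := ℚ) (n α)]
    have hzero := (Finset.sum_eq_zero_iff_of_nonneg (fun α _ => hnonneg α)).1 h2
    intro α
    rcases Nat.eq_zero_or_pos (n α) with h | h
    · exact Or.inl h
    · right
      have := hzero α (Finset.mem_univ α)
      have hna : (0:ℚ) < (n α : ℚ) := by exact_mod_cast h
      have : (n α : ℚ) * (htQ (α : ι → ℚ) - 1) = 0 := by linarith [this]
      rcases mul_eq_zero.1 this with h' | h'
      · exact absurd h' hna.ne'
      · linarith
  funext α
  by_cases hsimp : ∃ i, (α : ι → ℚ) = Pi.single i 1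
  · obtain ⟨i, hi⟩ := hsimp
    rw [D.canonTuple_simple ν i α hi]
    -- coordinate i of ν equals n α
    have hfil := (Finset.mem_filter.1 hn).2
    have hco := congrArg (fun f => f i) hfil
    simp only [Finset.sum_apply, Pi.smul_apply, smul_eq_mul] at hco
    rw [Finset.sum_eq_single α] at hco
    · rw [hi, Pi.single_eq_same, mul_one] at hco
      have : ν i = (((ν i).num.toNat : ℕ) : ℚ) := inQplus_coord ν hν i
      rw [this] at hco
      exact_mod_cast hco
    · intro β _ hβ
      rcases hkey β with h0 | h1
      · simp [h0]
      · obtain ⟨j, hj⟩ := D.simple_of_ht_one β.2 h1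
        have hji : j ≠ i := by
          intro h
          apply hβ
          apply Subtype.ext
          rw [hj, hi, h]
        rw [hj, Pi.single_eq_of_ne (Ne.symm hji), mul_zero]
    · simp
  · push_neg at hsimp
    rw [D.canonTuple_nonsimple ν α hsimp]
    rcases hkey α with h0 | h1
    · exact h0
    · obtain ⟨i, hi⟩ := D.simple_of_ht_one α.2 h1
      exact absurd hi (hsimp i)

lemma Pq_monic (ν : ι → ℚ) (hν : inQplus ν) :
    (Pq D.Δplus ν).Monic ∧ (Pq D.Δplus ν).degree = ((htN ν : ℕ) : WithBot ℕ) := by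
  have hmem := D.canonTuple_mem ν hν
  rw [Pq, ← Finset.add_sum_erase _ _ hmem, D.canonTuple_sum ν hν]
  have hrest : (∑ n ∈ (PqTuples D.Δplus ν).erase (D.canonTuple ν),
      (Polynomial.X : Polynomial ℚ) ^ (∑ α : ↥D.Δplus, n α)).degree
      < ((htN ν : ℕ) : WithBot ℕ) := by
    apply lt_of_le_of_lt (Polynomial.degree_sum_le _ _)
    rw [Finset.sup_lt_iff (by exact WithBot.bot_lt_coe _)]
    intro n hn
    obtain ⟨hne, hmem'⟩ := Finset.mem_erase.1 hn
    rw [Polynomial.degree_X_pow]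
    have hle : ((∑ α : ↥D.Δplus, n α : ℕ) : ℚ) ≤ htQ ν := tuple_sum_le D ν n hmem'
    rw [← htN_cast ν hν] at hle
    have hle' : ∑ α : ↥D.Δplus, n α ≤ htN ν := by exact_mod_cast hle
    have hne' : ∑ α : ↥D.Δplus, n α ≠ htN ν := by
      intro h
      exact hne (D.tuple_eq_canon ν hν n hmem' h)
    exact_mod_cast lt_of_le_of_ne hle' hne'
  have hXdeg : ((Polynomial.X : Polynomial ℚ) ^ htN ν).degree = ((htN ν : ℕ) : WithBot ℕ) :=
    Polynomial.degree_X_pow _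
  constructor
  · exact (Polynomial.monic_X_pow _).add_of_left (by rw [hXdeg]; exact hrest)
  · rw [Polynomial.degree_add_eq_left_of_degree_lt (by rw [hXdeg]; exact hrest), hXdeg]

end RootSystemData
namespace RootSystemData
variable {ι : Type} [Fintype ι] [DecidableEq ι] (D : RootSystemData ι)

lemma sign_one [Fintype D.weyl] : D.sign (1 : D.weyl) = 1 := by
  rw [sign]
  have h1 : ((1 : D.weyl) : (ι → ℚ) ≃ₗ[ℚ] (ι → ℚ)) = LinearEquiv.refl ℚ (ι → ℚ) := rfl
  rw [h1]
  simp

lemma Mq_monic_deg [Fintype D.weyl] (lam mu : ι → ℚ) (hdom : D.dominant lam)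
    (h : inQplus (lam - mu)) :
    (D.Mq lam mu).Monic ∧ (D.Mq lam mu).degree = ((htN (lam - mu) : ℕ) : WithBot ℕ) := by
  classical
  have hsplit : D.Mq lam mu = Pq D.Δplus (lam - mu) +
      ∑ w ∈ Finset.univ.erase (1 : D.weyl),
        D.sign w • Pq D.Δplus (w.1 (lam + D.rho) - (mu + D.rho)) := by
    rw [Mq, ← Finset.add_sum_erase Finset.univ _ (Finset.mem_univ (1 : D.weyl))]
    congr 1
    have h1 : (1 : D.weyl).1 (lam + D.rho) - (mu + D.rho) = lam - mu := by
      show (lam + D.rho) - (mu + D.rho) = lam - mu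
      abel
    rw [h1, D.sign_one, one_smul]
  have hrest : (∑ w ∈ Finset.univ.erase (1 : D.weyl),
      D.sign w • Pq D.Δplus (w.1 (lam + D.rho) - (mu + D.rho))).degree
      < ((htN (lam - mu) : ℕ) : WithBot ℕ) := by
    apply lt_of_le_of_lt (Polynomial.degree_sum_le _ _)
    rw [Finset.sup_lt_iff (by exact WithBot.bot_lt_coe _)]
    intro w hw
    have hwne : w ≠ 1 := (Finset.mem_erase.1 hw).1
    apply lt_of_le_of_lt (Polynomial.degree_smul_le _ _)
    apply Pq_degree_lt
    have hdecomp : w.1 (lam + D.rho) - (mu + D.rho) =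
        (w.1 (lam + D.rho) - (lam + D.rho)) + (lam - mu) := by abel
    rw [hdecomp, htQ_add]
    have h1 := D.key_weyl lam hdom w hwne
    have h2 : htQ (lam - mu) = ((htN (lam - mu) : ℕ) : ℚ) := (htN_cast _ h).symm
    linarith
  have hmon := D.Pq_monic (lam - mu) h
  rw [hsplit]
  constructor
  · exact hmon.1.add_of_left (by rw [hmon.2]; exact hrest)
  · rw [Polynomial.degree_add_eq_left_of_degree_lt (by rw [hmon.2]; exact hrest), hmon.2]

end RootSystemData

section Statements
open Polynomial
variable {ι : Type} [Fintype ι] [DecidableEq ι]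

theorem stmt3 (D : RootSystemData ι) [Fintype D.weyl] (lam mu : ι → ℚ)
    (hdom : D.dominant lam) (hlam : D.integralWt lam) (hmu : D.integralWt mu)
    (h : inQplus (lam - mu)) :
    (D.Mq lam mu).Monic ∧ (D.Mq lam mu).degree = ((htN (lam - mu) : ℕ) : WithBot ℕ) ∧
      D.Mq lam lam = 1 := by
  have h1 := D.Mq_monic_deg lam mu hdom h
  have hzero : inQplus (lam - lam) := by
    rw [sub_self]
    intro i
    constructor
    · simp
    · simp
  have h2 := D.Mq_monic_deg lam lam hdom hzero
  have hht : htN (lam - lam) = 0 := by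
    rw [sub_self]
    simp [htN]
  refine ⟨h1.1, h1.2, ?_⟩
  have hdeg0 : (D.Mq lam lam).degree = ((0 : ℕ) : WithBot ℕ) := by
    rw [h2.2, hht]
  have hnat : (D.Mq lam lam).natDegree = 0 :=
    Polynomial.natDegree_eq_of_degree_eq_some hdeg0
  exact (h2.1.natDegree_eq_zero).1 hnat

end Statements
end

section
/- All coefficients of the formal series ξ_{q+1}, obtained from the degenerate Cherednik kernel ξ_q by substituting q ↦ q+1, are polynomials in q with nonnegative integer coefficients. Equivalently, M_0^{−μ}(q+1) ∈ ℤ≥0[q] for every μ ∈ Q₊. -/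
open Polynomial

section XiAux
open Polynomial
variable {ι : Type} [Fintype ι] [DecidableEq ι]

/-- Per-factor polynomial `1` (if `j = 0`) or `X^j - X^{j-1}`. -/
noncomputable def gQ (j : ℕ) : Polynomial ℚ := if j = 0 then 1 else X ^ j - X ^ (j - 1)

/-- Natural-coefficient form of `gQ j` after the substitution `q ↦ q + 1`. -/
noncomputable def hN (j : ℕ) : Polynomial ℕ := if j = 0 then 1 else X * (X + 1) ^ (j - 1)

lemma gQ_comp (j : ℕ) : (gQ j).comp (X + 1) = (hN j).map (Nat.castRingHom ℚ) := by
  rcases j with _ | j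
  · simp [gQ, hN]
  · simp only [gQ, hN, Nat.succ_ne_zero, if_false, Nat.succ_sub_one]
    rw [sub_comp, pow_comp, pow_comp, X_comp, Polynomial.map_mul, Polynomial.map_pow,
      Polynomial.map_add, Polynomial.map_one, map_X, pow_succ]
    ring

lemma factor_sum (B j : ℕ) (hj : j ≤ B) :
    ∑ e ∈ (Finset.range 2 ×ˢ Finset.range (B + 1)).filter (fun e => e.1 + e.2 = j),
      (-1 : Polynomial ℚ) ^ e.1 * X ^ e.2 = gQ j := by
  rw [Finset.sum_filter, Finset.sum_product]
  rw [show (2 : ℕ) = 0 + 1 + 1 by rfl, Finset.sum_range_succ, Finset.sum_range_succ,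
    Finset.sum_range_zero]
  rcases j with _ | j
  · have h1 : ∀ n, (0 + n = 0) = (n = 0) := fun n => by simp
    have h2 : ∀ n : ℕ, (1 + n = 0) = False := fun n => by simp
    simp only [h1, h2, if_false, Finset.sum_const_zero, add_zero, zero_add]
    rw [Finset.sum_ite_eq']
    simp [gQ]
  · have h1 : ∀ n, (0 + n = j + 1) = (n = j + 1) := fun n => by simp
    have h2 : ∀ n, (1 + n = j + 1) = (n = j) := fun n => by rw [eq_iff_iff]; omega
    simp only [h1, h2]
    rw [Finset.sum_ite_eq', Finset.sum_ite_eq']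
    have m1 : j + 1 ∈ Finset.range (B + 1) := Finset.mem_range.2 (Nat.lt_succ_of_le hj)
    have m2 : j ∈ Finset.range (B + 1) :=
      Finset.mem_range.2 (Nat.lt_succ_of_le (le_trans (Nat.le_succ j) hj))
    simp only [m1, m2, if_true, gQ, Nat.succ_ne_zero, if_false, Nat.succ_sub_one]
    ring

lemma rat_le_num {q : ℚ} (hq : 0 ≤ q) : q ≤ (q.num : ℚ) := by
  nth_rewrite 1 [← Rat.num_div_den q]
  have h1 : (1:ℚ) ≤ q.den := by exact_mod_cast Rat.den_pos q
  have hn : (0:ℚ) ≤ q.num := by exact_mod_cast Rat.num_nonneg.2 hq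
  rw [div_le_iff₀ (by linarith)]
  nlinarith

lemma one_le_of_pos_int {q : ℚ} (h0 : 0 ≤ q) (hd : q.den = 1) (hne : q ≠ 0) : 1 ≤ q := by
  have h : (q.num : ℚ) = q := by
    nth_rewrite 2 [← Rat.num_div_den q]
    rw [hd]; simp
  have hn : 0 < q.num := Rat.num_pos.2 (lt_of_le_of_ne h0 (Ne.symm hne))
  calc (1:ℚ) ≤ (q.num : ℚ) := by exact_mod_cast hn
  _ = q := h

lemma height_bound (D : RootSystemData ι) (μ : ι → ℚ) (hμ : inQplus μ)
    (m : ↥D.Δplus → ℕ) (hm : ∑ α : ↥D.Δplus, (m α : ℚ) • (α : ι → ℚ) = μ)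
    (α : ↥D.Δplus) : m α ≤ PqBound μ := by
  have ht1 : ∀ β : ↥D.Δplus, (1 : ℚ) ≤ ∑ i, (β : ι → ℚ) i := by
    intro β
    have hnz : (β : ι → ℚ) ≠ 0 := D.nonzero _ β.2
    have hco := D.coords_nat _ β.2
    obtain ⟨i0, hi0⟩ : ∃ i0, (β : ι → ℚ) i0 ≠ 0 := by
      by_contra h
      push_neg at h
      exact hnz (funext h)
    calc (1 : ℚ) ≤ (β : ι → ℚ) i0 := one_le_of_pos_int (hco i0).1 (hco i0).2 hi0
    _ ≤ ∑ i, (β : ι → ℚ) i :=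
        Finset.single_le_sum (fun i _ => (hco i).1) (Finset.mem_univ i0)
  have key : ∑ β : ↥D.Δplus, (m β : ℚ) * (∑ i, (β : ι → ℚ) i) = ∑ i, μ i := by
    rw [← hm]
    simp only [Finset.sum_apply, Pi.smul_apply, smul_eq_mul]
    rw [Finset.sum_comm]
    exact Finset.sum_congr rfl fun β _ => Finset.mul_sum _ _ _
  have hterm : ∀ β : ↥D.Δplus, (0:ℚ) ≤ (m β : ℚ) * (∑ i, (β : ι → ℚ) i) := by
    intro β
    exact mul_nonneg (Nat.cast_nonneg _) (le_trans zero_le_one (ht1 β))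
  have h1 : (m α : ℚ) ≤ ∑ i, μ i := by
    calc (m α : ℚ) = (m α : ℚ) * 1 := (mul_one _).symm
    _ ≤ (m α : ℚ) * (∑ i, (α : ι → ℚ) i) :=
        mul_le_mul_of_nonneg_left (ht1 α) (Nat.cast_nonneg _)
    _ ≤ ∑ β : ↥D.Δplus, (m β : ℚ) * (∑ i, (β : ι → ℚ) i) :=
        Finset.single_le_sum (fun β _ => hterm β) (Finset.mem_univ α)
    _ = ∑ i, μ i := key
  have hμ0 : (0:ℚ) ≤ ∑ i, μ i := Finset.sum_nonneg fun i _ => (hμ i).1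
  have h2 : (∑ i, μ i) ≤ (PqBound μ : ℚ) := by
    have h3 := rat_le_num hμ0
    rw [PqBound]
    have h4 : (((∑ i, μ i).num.toNat : ℕ) : ℚ) = (((∑ i, μ i).num : ℤ) : ℚ) := by
      exact_mod_cast congrArg (Int.cast : ℤ → ℚ) (Int.toNat_of_nonneg (Rat.num_nonneg.2 hμ0))
    rw [h4]
    exact h3
  exact_mod_cast le_trans h1 h2

lemma xiCoeff_eq (D : RootSystemData ι) (μ : ι → ℚ) (hμ : inQplus μ) :
    xiCoeff D.Δplus μ =
      ∑ m ∈ (Fintype.piFinset fun _ : ↥D.Δplus => Finset.range (PqBound μ + 1)).filter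
        (fun m => ∑ α : ↥D.Δplus, (m α : ℚ) • (α : ι → ℚ) = μ),
        ∏ α : ↥D.Δplus, gQ (m α) := by
  classical
  set B := PqBound μ with hB
  set T := (Fintype.piFinset fun _ : ↥D.Δplus => Finset.range (B + 1)).filter
    (fun m => ∑ α : ↥D.Δplus, (m α : ℚ) • (α : ι → ℚ) = μ) with hT
  set S := (Fintype.piFinset fun _ : ↥D.Δplus =>
      Finset.range 2 ×ˢ Finset.range (B + 1)).filter
      (fun p => ∑ α : ↥D.Δplus, (((p α).1 + (p α).2 : ℕ) : ℚ) • (α : ι → ℚ) = μ) with hS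
  have hmaps : ∀ p ∈ S, (fun α => (p α).1 + (p α).2) ∈ T := by
    intro p hp
    rw [hS, Finset.mem_filter] at hp
    rw [hT, Finset.mem_filter]
    refine ⟨Fintype.mem_piFinset.2 fun α => Finset.mem_range.2 (Nat.lt_succ_of_le ?_), hp.2⟩
    exact height_bound D μ hμ _ hp.2 α
  rw [xiCoeff, ← hS, ← Finset.sum_fiberwise_of_maps_to hmaps]
  refine Finset.sum_congr rfl fun m hm => ?_
  rw [hT, Finset.mem_filter] at hm
  have hset : S.filter (fun p => (fun α => (p α).1 + (p α).2) = m) =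
      Fintype.piFinset (fun α : ↥D.Δplus =>
        (Finset.range 2 ×ˢ Finset.range (B + 1)).filter (fun e => e.1 + e.2 = m α)) := by
    ext p
    constructor
    · intro hp
      obtain ⟨hpS, hpm⟩ := Finset.mem_filter.1 hp
      rw [hS, Finset.mem_filter, Fintype.mem_piFinset] at hpS
      rw [Fintype.mem_piFinset]
      intro α
      rw [Finset.mem_filter]
      exact ⟨hpS.1 α, congrFun hpm α⟩
    · intro hp
      rw [Fintype.mem_piFinset] at hp
      have h := fun α => Finset.mem_filter.1 (hp α)
      rw [Finset.mem_filter, hS, Finset.mem_filter, Fintype.mem_piFinset]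
      refine ⟨⟨fun α => (h α).1, ?_⟩, funext fun α => (h α).2⟩
      rw [← hm.2]
      exact Finset.sum_congr rfl fun α _ => by rw [(h α).2]
  rw [hset]
  have hfac : ∀ p : ↥D.Δplus → ℕ × ℕ,
      (-1 : Polynomial ℚ) ^ (∑ α : ↥D.Δplus, (p α).1) * X ^ (∑ α : ↥D.Δplus, (p α).2) =
        ∏ α : ↥D.Δplus, ((-1 : Polynomial ℚ) ^ (p α).1 * X ^ (p α).2) := by
    intro p
    rw [Finset.prod_mul_distrib, Finset.prod_pow_eq_pow_sum, Finset.prod_pow_eq_pow_sum]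
  simp_rw [hfac]
  have hpu := Finset.prod_univ_sum
    (fun α : ↥D.Δplus => (Finset.range 2 ×ˢ Finset.range (B + 1)).filter
      (fun e => e.1 + e.2 = m α))
    (fun (α : ↥D.Δplus) (e : ℕ × ℕ) => (-1 : Polynomial ℚ) ^ e.1 * X ^ e.2)
  refine hpu.symm.trans (Finset.prod_congr rfl fun α _ => ?_)
  exact factor_sum B (m α)
    (Nat.lt_succ_iff.1 (Finset.mem_range.1 (Fintype.mem_piFinset.1 hm.1 α)))

end XiAux

section Statements
open Polynomial
variable {ι : Type} [Fintype ι] [DecidableEq ι]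

theorem stmt9 (D : RootSystemData ι) (μ : ι → ℚ) (hμ : inQplus μ) (k : ℕ) :
    ∃ n : ℕ, ((xiCoeff D.Δplus μ).comp (Polynomial.X + 1)).coeff k = (n : ℚ) := by
  classical
  rw [xiCoeff_eq D μ hμ, sum_comp]
  have hcomp : ∀ m ∈ (Fintype.piFinset fun _ : ↥D.Δplus => Finset.range (PqBound μ + 1)).filter
      (fun m => ∑ α : ↥D.Δplus, (m α : ℚ) • (α : ι → ℚ) = μ),
      (∏ α : ↥D.Δplus, gQ (m α)).comp (X + 1) =
        (∏ α : ↥D.Δplus, hN (m α)).map (Nat.castRingHom ℚ) := by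
    intro m _
    rw [prod_comp, Polynomial.map_prod]
    exact Finset.prod_congr rfl fun α _ => gQ_comp _
  rw [Finset.sum_congr rfl hcomp, ← Polynomial.map_sum]
  refine ⟨(∑ m ∈ (Fintype.piFinset fun _ : ↥D.Δplus => Finset.range (PqBound μ + 1)).filter
      (fun m => ∑ α : ↥D.Δplus, (m α : ℚ) • (α : ι → ℚ) = μ),
      ∏ α : ↥D.Δplus, hN (m α)).coeff k, ?_⟩
  rw [coeff_map]
  rfl

end Statements
end
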